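/- For all real numbers a, b, c with b ≥ c and for p ≥ 2, the inequality (a-b)^{p-1} - (a-c)^{p-1} ≤ 2^{2-p} (c-b)^{p-1} holds, where for x ∈ ℝ and ν > 0 we write x^ν := |x|^{ν-1} x. -/
import Mathlib


open Real

private lemma sgnpow_of_nonneg {q t : ℝ} (hq : 0 < q) (ht : 0 ≤ t) :
    |t| ^ (q - 1) * t = t ^ q := by
  rcases eq_or_lt_of_le ht with h | h
  · simp [← h, Real.zero_rpow (ne_of_gt hq)]
  · rw [abs_of_pos h, ← Real.rpow_add_one (ne_of_gt h)]
    norm_num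

private lemma super_add {q s t : ℝ} (hq : 1 ≤ q) (hs : 0 ≤ s) (ht : 0 ≤ t) :
    s ^ q + t ^ q ≤ (s + t) ^ q := by
  have h := NNReal.add_rpow_le_rpow_add s.toNNReal t.toNNReal hq
  have h2 : ((s.toNNReal + t.toNNReal : NNReal) : ℝ) = s + t := by
    push_cast
    rw [Real.coe_toNNReal _ hs, Real.coe_toNNReal _ ht]
  have := (NNReal.coe_le_coe).2 h
  push_cast at this
  rwa [Real.coe_toNNReal _ hs, Real.coe_toNNReal _ ht] at this

private lemma conv_add {q s t : ℝ} (hq : 1 ≤ q) (hs : 0 ≤ s) (ht : 0 ≤ t) :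
    (2 : ℝ) ^ (1 - q) * (s + t) ^ q ≤ s ^ q + t ^ q := by
  have h := NNReal.rpow_add_le_mul_rpow_add_rpow s.toNNReal t.toNNReal hq
  have hR : (s + t) ^ q ≤ 2 ^ (q - 1) * (s ^ q + t ^ q) := by
    have := (NNReal.coe_le_coe).2 h
    push_cast at this
    rwa [Real.coe_toNNReal _ hs, Real.coe_toNNReal _ ht] at this
  have h2pos : (0 : ℝ) < 2 ^ (1 - q) := Real.rpow_pos_of_pos (by norm_num) _
  calc (2 : ℝ) ^ (1 - q) * (s + t) ^ q
      ≤ 2 ^ (1 - q) * (2 ^ (q - 1) * (s ^ q + t ^ q)) :=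
        mul_le_mul_of_nonneg_left hR (le_of_lt h2pos)
    _ = s ^ q + t ^ q := by
        rw [← mul_assoc, ← Real.rpow_add (by norm_num : (0:ℝ) < 2)]
        norm_num

private lemma key_ineq {q x y : ℝ} (hq : 1 ≤ q) (hxy : x ≤ y) :
    (2 : ℝ) ^ (1 - q) * (y - x) ^ q ≤ |y| ^ (q - 1) * y - |x| ^ (q - 1) * x := by
  have hq0 : 0 < q := lt_of_lt_of_le one_pos hq
  have hd : 0 ≤ y - x := sub_nonneg.2 hxy
  have hdq : 0 ≤ (y - x) ^ q := Real.rpow_nonneg hd q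
  have h2le : (2 : ℝ) ^ (1 - q) ≤ 1 := by
    calc (2 : ℝ) ^ (1 - q) ≤ 2 ^ (0 : ℝ) :=
      Real.rpow_le_rpow_of_exponent_le (by norm_num) (by linarith)
    _ = 1 := Real.rpow_zero 2
  have hcoef : (2:ℝ) ^ (1 - q) * (y - x) ^ q ≤ (y - x) ^ q :=
    mul_le_of_le_one_left hdq h2le
  rcases le_or_gt 0 x with h1 | h1
  · -- 0 ≤ x ≤ y
    have hy : 0 ≤ y := le_trans h1 hxy
    rw [sgnpow_of_nonneg hq0 h1, sgnpow_of_nonneg hq0 hy]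
    have hsup := super_add hq h1 hd
    have heq : x + (y - x) = y := by ring
    rw [heq] at hsup
    linarith
  · rcases le_or_gt y 0 with h2 | h2
    · -- x < y ≤ 0
      have hgx : |x| ^ (q - 1) * x = -((-x) ^ q) := by
        have h := sgnpow_of_nonneg hq0 (neg_nonneg.2 (le_of_lt h1))
        rw [abs_neg] at h
        linarith
      have hgy : |y| ^ (q - 1) * y = -((-y) ^ q) := by
        have h := sgnpow_of_nonneg hq0 (neg_nonneg.2 h2)
        rw [abs_neg] at h
        linarith
      rw [hgx, hgy]
      have hsup := super_add hq (neg_nonneg.2 h2) hd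
      have heq : -y + (y - x) = -x := by ring
      rw [heq] at hsup
      linarith
    · -- x < 0 < y
      rw [sgnpow_of_nonneg hq0 (le_of_lt h2)]
      have hgx : |x| ^ (q - 1) * x = -((-x) ^ q) := by
        have h := sgnpow_of_nonneg hq0 (neg_nonneg.2 (le_of_lt h1))
        rw [abs_neg] at h
        linarith
      rw [hgx]
      have hconv := conv_add hq (le_of_lt h2) (neg_nonneg.2 (le_of_lt h1))
      have heq : y + -x = y - x := by ring
      rw [heq] at hconv
      linarith

/-- For p ≥ 2 and b ≥ c, (a-b)^{p-1} - (a-c)^{p-1} ≤ 2^{2-p}(c-b)^{p-1},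
where x^ν := |x|^{ν-1} x. -/
theorem stmt_0 (p a b c : ℝ) (hp : 2 ≤ p) (hbc : c ≤ b) :
    |a - b| ^ (p - 1 - 1) * (a - b) - |a - c| ^ (p - 1 - 1) * (a - c) ≤
      (2 : ℝ) ^ (2 - p) * (|c - b| ^ (p - 1 - 1) * (c - b)) := by
  set q := p - 1 with hqdef
  have hq : 1 ≤ q := by rw [hqdef]; linarith
  have hq0 : 0 < q := lt_of_lt_of_le one_pos hq
  set x := a - b with hx
  set y := a - c with hy
  have hxy : x ≤ y := by rw [hx, hy]; linarith
  have hd : 0 ≤ y - x := sub_nonneg.2 hxy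
  have hRHS : |c - b| ^ (p - 1 - 1) * (c - b) = -((y - x) ^ q) := by
    have hcb : c - b = -(y - x) := by rw [hx, hy]; ring
    have habs : |c - b| = y - x := by rw [hcb, abs_neg, abs_of_nonneg hd]
    have hpq : p - 1 - 1 = q - 1 := by rw [hqdef]
    have h := sgnpow_of_nonneg hq0 hd
    rw [abs_of_nonneg hd] at h
    rw [habs, hcb, hpq, mul_neg, h]
  have h21 : (2 : ℝ) ^ (2 - p) = (2 : ℝ) ^ (1 - q) := by
    rw [hqdef]; ring_nf
  have hpq : p - 1 - 1 = q - 1 := by rw [hqdef]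
  rw [hRHS, h21, mul_neg, hpq]
  have hkey := key_ineq hq hxy
  linarith
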